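/- arXiv:math/9907153 — 4 statements merged into one kernel-verified Lean document; each statement's English description precedes it below -/
import Mathlib

section
/- Let G be a locally compact Hausdorff group acting continuously on a locally compact Hausdorff space X. If every compact subset of X is wandering, then the action of G on X is proper. -/
open scoped Pointwise

/-- If every compact subset of `X` is wandering then the action of `G` on `X` is proper. -/
theorem compact_wandering_proper_action {G X : Type*} [Group G] [TopologicalSpace G]
    [IsTopologicalGroup G] [LocallyCompactSpace G] [T2Space G]
    [TopologicalSpace X] [LocallyCompactSpace X] [T2Space X]
    [MulAction G X] [ContinuousSMul G X]
    (hwand : ∀ N : Set X, IsCompact N → IsCompact (closure {s : G | ((s • N) ∩ N).Nonempty})) :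
    IsProperMap (fun p : G × X => (p.1 • p.2, p.2)) := by
  have hcont : Continuous (fun p : G × X => (p.1 • p.2, p.2)) :=
    (continuous_smul.prodMk continuous_snd)
  rw [isProperMap_iff_isCompact_preimage]
  refine ⟨hcont, fun K hK => ?_⟩
  set N : Set X := (Prod.fst '' K) ∪ (Prod.snd '' K) with hN
  have hNcpt : IsCompact N := (hK.image continuous_fst).union (hK.image continuous_snd)
  have hGcpt : IsCompact (closure {s : G | ((s • N) ∩ N).Nonempty}) := hwand N hNcpt
  have hsub : (fun p : G × X => (p.1 • p.2, p.2)) ⁻¹' K ⊆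
      closure {s : G | ((s • N) ∩ N).Nonempty} ×ˢ N := by
    rintro ⟨s, x⟩ hp
    simp only [Set.mem_preimage] at hp
    have hx : x ∈ N := Or.inr ⟨(s • x, x), hp, rfl⟩
    have hsx : s • x ∈ N := Or.inl ⟨(s • x, x), hp, rfl⟩
    exact ⟨subset_closure ⟨s • x, ⟨x, hx, rfl⟩, hsx⟩, hx⟩
  have hclosed : IsClosed ((fun p : G × X => (p.1 • p.2, p.2)) ⁻¹' K) :=
    hK.isClosed.preimage hcont
  exact (hGcpt.prod hNcpt).of_isClosed_subset hclosed hsub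
end

section
/- Let G be a locally compact Hausdorff group acting continuously on a locally compact Hausdorff space X such that X is a Cartan G-space. Then every orbit G·x is closed in X. -/
open scoped Pointwise

/-- If `X` is a Cartan `G`-space then every orbit is closed. -/
theorem cartan_orbit_closed {G X : Type*} [Group G] [TopologicalSpace G]
    [IsTopologicalGroup G] [LocallyCompactSpace G] [T2Space G]
    [TopologicalSpace X] [LocallyCompactSpace X] [T2Space X]
    [MulAction G X] [ContinuousSMul G X]
    (hCartan : ∀ x : X, ∃ N ∈ nhds x, IsCompact (closure {s : G | ((s • N) ∩ N).Nonempty})) :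
    ∀ x : X, IsClosed (MulAction.orbit G x) := by
  intro x
  rw [← isOpen_compl_iff]
  -- Show closure orbit ⊆ orbit instead
  have key : closure (MulAction.orbit G x) ⊆ MulAction.orbit G x := by
    intro y hy
    obtain ⟨N, hN, hK⟩ := hCartan y
    set K := closure {s : G | ((s • N) ∩ N).Nonempty} with hKdef
    rw [mem_closure_iff_nhds] at hy
    obtain ⟨z, hzN, g₀, hg₀⟩ := hy N hN
    -- g₀ • x = z ∈ N
    set C : Set X := (fun t : G => t • x) '' ((· * g₀) '' K) with hCdef
    have hCcompact : IsCompact C :=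
      (hK.image (continuous_mul_right g₀)).image
        (continuous_id.smul continuous_const)
    have hsub : MulAction.orbit G x ∩ N ⊆ C := by
      rintro _ ⟨⟨s, rfl⟩, hsN⟩
      refine ⟨s * g₀⁻¹ * g₀, ⟨s * g₀⁻¹, ?_, rfl⟩, by simp⟩
      apply subset_closure
      refine ⟨s • x, ⟨z, hzN, ?_⟩, hsN⟩
      simp only [← hg₀, smul_smul]
      group
    have hyC : y ∈ C := by
      have : y ∈ closure (MulAction.orbit G x ∩ N) := by
        rw [mem_closure_iff_nhds]
        intro t ht
        obtain ⟨w, hw, hworb⟩ := hy (t ∩ N) (Filter.inter_mem ht hN)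
        exact ⟨w, hw.1, hworb, hw.2⟩
      have := closure_mono hsub this
      rwa [hCcompact.isClosed.closure_eq] at this
    obtain ⟨t, -, rfl⟩ := hyC
    exact ⟨t, rfl⟩
  rw [isOpen_compl_iff]
  exact isClosed_of_closure_subset key
end

section
/- Let G be a locally compact Hausdorff group acting continuously on a locally compact Hausdorff space X. If X is a Cartan G-space, then every point x ∈ X has an open wandering neighbourhood U such that the restricted action of G on the saturation G·U is proper. -/
open scoped Pointwise

/-- The saturation `G • U` of a subset `U` of a `G`-space. -/
def saturation (G : Type*) {X : Type*} [SMul G X] (U : Set X) : Set X := ⋃ s : G, s • U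

theorem smul_mem_saturation {G X : Type*} [Group G] [MulAction G X] {U : Set X} (s : G)
    {y : X} (hy : y ∈ saturation G U) : s • y ∈ saturation G U := by
  obtain ⟨_, ⟨t, rfl⟩, hyt⟩ := hy
  exact Set.mem_iUnion.mpr ⟨s * t, by rw [mul_smul]; exact Set.smul_mem_smul_set hyt⟩

/-- If `X` is a Cartan `G`-space then every point of `X` has an open wandering
neighbourhood `U` such that the restricted action of `G` on the saturation `G • U`
is proper. -/
theorem cartan_open_wandering_saturation_proper {G X : Type*} [Group G] [TopologicalSpace G]
    [IsTopologicalGroup G] [LocallyCompactSpace G] [T2Space G]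
    [TopologicalSpace X] [LocallyCompactSpace X] [T2Space X]
    [MulAction G X] [ContinuousSMul G X]
    (hCartan : ∀ x : X, ∃ N ∈ nhds x, IsCompact (closure {s : G | ((s • N) ∩ N).Nonempty})) :
    ∀ x : X, ∃ U : Set X, IsOpen U ∧ x ∈ U ∧
      IsCompact (closure {s : G | ((s • U) ∩ U).Nonempty}) ∧
      IsProperMap (fun q : G × ↥(saturation G U) =>
        ((⟨q.1 • (q.2 : X), smul_mem_saturation q.1 q.2.2⟩ : ↥(saturation G U)), q.2)) := by
  intro x
  obtain ⟨N, hN, hNc⟩ := hCartan x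
  set U := interior N with hUdef
  have hUo : IsOpen U := isOpen_interior
  have hT : IsCompact (closure {s : G | ((s • U) ∩ U).Nonempty}) := by
    refine hNc.of_isClosed_subset isClosed_closure (closure_mono fun s hs => ?_)
    exact hs.mono (Set.inter_subset_inter (Set.smul_set_mono interior_subset) interior_subset)
  refine ⟨U, hUo, mem_interior_iff_mem_nhds.mpr hN, hT, ?_⟩
  have hYo : IsOpen (saturation G U) := isOpen_iUnion fun s => hUo.smul s
  haveI : LocallyCompactSpace (saturation G U) := hYo.locallyCompactSpace
  have hf : Continuous (fun q : G × ↥(saturation G U) =>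
      ((⟨q.1 • (q.2 : X), smul_mem_saturation q.1 q.2.2⟩ : ↥(saturation G U)), q.2)) := by
    refine Continuous.prodMk (Continuous.subtype_mk ?_ _) continuous_snd
    exact continuous_fst.smul (continuous_subtype_val.comp continuous_snd)
  rw [isProperMap_iff_isCompact_preimage]
  refine ⟨hf, fun C hC => ?_⟩
  -- the compact set of points appearing in `C`, viewed in `X`
  set K : Set X := Subtype.val '' ((Prod.fst '' C) ∪ (Prod.snd '' C)) with hKdef
  have hK : IsCompact K :=
    ((hC.image continuous_fst).union (hC.image continuous_snd)).image continuous_subtype_val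
  have hcover : K ⊆ ⋃ s : G, s • U := by
    rintro y ⟨z, _, rfl⟩
    exact z.2
  obtain ⟨I, hI⟩ := hK.elim_finite_subcover (fun s : G => s • U) (fun s => hUo.smul s) hcover
  set S : Set G :=
    ⋃ i ∈ I, ⋃ j ∈ I, (fun t => j * t * i⁻¹) '' closure {s : G | ((s • U) ∩ U).Nonempty}
    with hSdef
  have hS : IsCompact S := by
    refine I.finite_toSet.isCompact_biUnion fun i _ =>
      I.finite_toSet.isCompact_biUnion fun j _ => hT.image ?_
    continuity
  refine IsCompact.of_isClosed_subset (hS.prod (hC.image continuous_snd))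
    (hC.isClosed.preimage hf) ?_
  rintro ⟨s, y⟩ hsy
  have hsyC : ((⟨s • (y : X), smul_mem_saturation s y.2⟩ : ↥(saturation G U)), y) ∈ C := hsy
  refine ⟨?_, ⟨_, hsyC, rfl⟩⟩
  have hyK : (y : X) ∈ K := ⟨y, Or.inr ⟨_, hsyC, rfl⟩, rfl⟩
  have hsyK : s • (y : X) ∈ K :=
    ⟨⟨s • (y : X), smul_mem_saturation s y.2⟩, Or.inl ⟨_, hsyC, rfl⟩, rfl⟩
  obtain ⟨i, hiI, u, huU, hiu⟩ : ∃ i ∈ I, ∃ u ∈ U, i • u = (y : X) := by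
    have := hI hyK
    simpa [Set.mem_smul_set] using Set.mem_iUnion₂.mp this
  obtain ⟨j, hjI, v, hvU, hjv⟩ : ∃ j ∈ I, ∃ v ∈ U, j • v = s • (y : X) := by
    have := hI hsyK
    simpa [Set.mem_smul_set] using Set.mem_iUnion₂.mp this
  refine Set.mem_biUnion hiI (Set.mem_biUnion hjI ⟨j⁻¹ * s * i, subset_closure ⟨v, ?_, hvU⟩, by group⟩)
  refine ⟨u, huU, ?_⟩
  calc (j⁻¹ * s * i) • u = j⁻¹ • (s • (i • u)) := by rw [mul_smul, mul_smul]
  _ = j⁻¹ • (j • v) := by rw [hiu, hjv]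
  _ = v := inv_smul_smul j v
end

section
/- In Palais's example (the strip X = [−1,1] × ℝ with the flow along translates of y = x²/(1−x²) in the interior and vertical translation with opposite orientations on the two boundary lines), every point of X has a wandering neighbourhood; that is, X is a Cartan ℝ-space. -/
noncomputable section

/-- The curve `y = x²/(1-x²)` of Palais's example. -/
def palaisCurve (x : ℝ) : ℝ := x ^ 2 / (1 - x ^ 2)

/-- The strip `X = [-1,1] × ℝ`. -/
def palaisStrip : Set (ℝ × ℝ) := {p | -1 ≤ p.1 ∧ p.1 ≤ 1}

/-- Signed arc length along a vertical translate of the curve `y = x²/(1-x²)`,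
measured between the `x`-coordinates `x₀` and `x₁`. -/
def palaisArc (x₀ x₁ : ℝ) : ℝ := ∫ u in x₀..x₁, Real.sqrt (1 + deriv palaisCurve u ^ 2)

lemma palais_hasDerivAt (u : ℝ) (hu : |u| < 1) :
    HasDerivAt palaisCurve (2 * u / (1 - u ^ 2) ^ 2) u := by
  have hne : 1 - u ^ 2 ≠ 0 := by nlinarith [abs_nonneg u, sq_abs u, abs_lt.mp hu]
  have h1 : HasDerivAt (fun x : ℝ => x ^ 2) (2 * u) u := by
    simpa using hasDerivAt_pow 2 u
  have h2 : HasDerivAt (fun x : ℝ => 1 - x ^ 2) (-(2 * u)) u := by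
    exact ((hasDerivAt_const u (1:ℝ)).sub h1).congr_deriv (by ring)
  have := h1.div h2 hne
  exact this.congr_deriv (by ring)

lemma palais_deriv (u : ℝ) (hu : |u| < 1) :
    deriv palaisCurve u = 2 * u / (1 - u ^ 2) ^ 2 :=
  (palais_hasDerivAt u hu).deriv

lemma sqrt_le_one_add_abs (x : ℝ) : Real.sqrt (1 + x ^ 2) ≤ 1 + |x| := by
  have h : (1 : ℝ) + x ^ 2 ≤ (1 + |x|) ^ 2 := by nlinarith [abs_nonneg x, sq_abs x]
  calc Real.sqrt (1 + x ^ 2) ≤ Real.sqrt ((1 + |x|) ^ 2) := Real.sqrt_le_sqrt h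
    _ = 1 + |x| := by rw [Real.sqrt_sq (by positivity)]

lemma integrand_bound (r u : ℝ) (hr : r < 1) (hu : |u| ≤ r) :
    Real.sqrt (1 + deriv palaisCurve u ^ 2) ≤ 1 + 2 / (1 - r ^ 2) ^ 2 := by
  have hr0 : 0 ≤ r := le_trans (abs_nonneg u) hu
  have hru : |u| < 1 := lt_of_le_of_lt hu hr
  have h1 : (0:ℝ) < 1 - r ^ 2 := by nlinarith
  have h2 : 1 - r ^ 2 ≤ 1 - u ^ 2 := by nlinarith [sq_abs u, sq_abs r, abs_nonneg u]
  rw [palais_deriv u hru]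
  refine le_trans (sqrt_le_one_add_abs _) ?_
  gcongr 1 + ?_
  have hu2 : (0:ℝ) < 1 - u ^ 2 := lt_of_lt_of_le h1 h2
  rw [abs_div, abs_of_pos (by positivity : (0:ℝ) < (1 - u^2)^2)]
  apply div_le_div₀ (by norm_num) ?_ (by positivity) (by gcongr)
  · rw [abs_mul, abs_two]; nlinarith [abs_nonneg u]

lemma palaisArc_nonneg {a b : ℝ} (hab : a ≤ b) : 0 ≤ palaisArc a b :=
  intervalIntegral.integral_nonneg hab (fun u _ => Real.sqrt_nonneg _)

lemma palaisArc_symm (a b : ℝ) : palaisArc a b = - palaisArc b a := by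
  rw [palaisArc, palaisArc]; exact intervalIntegral.integral_symm b a

lemma arc_le (a b : ℝ) (ha : -1 < a) (hab : a ≤ b) (hb : b < 1)
    (hsign : (∀ u ∈ Set.Icc a b, 0 ≤ u) ∨ (∀ u ∈ Set.Icc a b, u ≤ 0)) :
    palaisArc a b ≤ (b - a) + |palaisCurve b - palaisCurve a| := by
  set g : ℝ → ℝ := fun u => 2 * u / (1 - u ^ 2) ^ 2 with hg
  have habs : ∀ u ∈ Set.Icc a b, |u| < 1 := fun u hu =>
    abs_lt.mpr ⟨lt_of_lt_of_le ha hu.1, lt_of_le_of_lt hu.2 hb⟩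
  have hne : ∀ u ∈ Set.Icc a b, (1 - u ^ 2) ^ 2 ≠ 0 := by
    intro u hu
    have := abs_lt.mp (habs u hu)
    have : (0:ℝ) < 1 - u ^ 2 := by nlinarith
    positivity
  have hgc : ContinuousOn g (Set.Icc a b) := by
    apply ContinuousOn.div
    · fun_prop
    · fun_prop
    · exact hne
  have huIcc : Set.uIcc a b = Set.Icc a b := Set.uIcc_of_le hab
  have hInt_g : IntervalIntegrable g MeasureTheory.volume a b :=
    (huIcc ▸ hgc).intervalIntegrable
  have hInt_absg : IntervalIntegrable (fun u => |g u|) MeasureTheory.volume a b :=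
    (huIcc ▸ hgc.abs).intervalIntegrable
  have hInt2 : IntervalIntegrable (fun u => 1 + |g u|) MeasureTheory.volume a b :=
    (intervalIntegrable_const).add hInt_absg
  have hInt1 : IntervalIntegrable (fun u => Real.sqrt (1 + deriv palaisCurve u ^ 2))
      MeasureTheory.volume a b := by
    apply ContinuousOn.intervalIntegrable
    rw [huIcc]
    have hc2 : ContinuousOn (fun u => Real.sqrt (1 + (g u) ^ 2)) (Set.Icc a b) :=
      (continuousOn_const.add (hgc.pow 2)).sqrt
    exact hc2.congr (fun u hu => by
      show Real.sqrt (1 + deriv palaisCurve u ^ 2) = Real.sqrt (1 + g u ^ 2)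
      rw [palais_deriv u (habs u hu)])
  have step_mono : palaisArc a b ≤ ∫ u in a..b, (1 + |g u|) := by
    apply intervalIntegral.integral_mono_on hab hInt1 hInt2
    intro u hu
    rw [palais_deriv u (habs u hu)]
    exact sqrt_le_one_add_abs _
  have step_add : (∫ u in a..b, (1 + |g u|)) = (b - a) + ∫ u in a..b, |g u| := by
    rw [intervalIntegral.integral_add intervalIntegrable_const hInt_absg]
    simp
  have step_ftc : (∫ u in a..b, g u) = palaisCurve b - palaisCurve a :=
    intervalIntegral.integral_eq_sub_of_hasDerivAt
      (fun u hu => palais_hasDerivAt u (habs u (huIcc ▸ hu))) hInt_g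
  have step_abs : (∫ u in a..b, |g u|) ≤ |palaisCurve b - palaisCurve a| := by
    rcases hsign with hs | hs
    · have heq : (∫ u in a..b, |g u|) = ∫ u in a..b, g u := by
        apply intervalIntegral.integral_congr
        intro u hu
        have hu' := huIcc ▸ hu
        have h0 : 0 ≤ u := hs u hu'
        have := abs_lt.mp (habs u hu')
        exact abs_of_nonneg (by positivity)
      rw [heq, step_ftc]; exact le_abs_self _
    · have heq : (∫ u in a..b, |g u|) = ∫ u in a..b, -g u := by
        apply intervalIntegral.integral_congr
        intro u hu
        have hu' := huIcc ▸ hu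
        have h0 : u ≤ 0 := hs u hu'
        have hd : (0:ℝ) < (1 - u ^ 2) ^ 2 := by
          obtain ⟨l, r⟩ := abs_lt.mp (habs u hu')
          have : (0:ℝ) < 1 - u ^ 2 := by nlinarith
          positivity
        have : g u ≤ 0 := div_nonpos_of_nonpos_of_nonneg (by linarith) hd.le
        exact abs_of_nonpos this
      rw [heq, intervalIntegral.integral_neg, step_ftc]
      exact neg_le_abs _
  linarith

lemma abs_palaisArc_le (x₀ x₁ : ℝ) (h₀ : |x₀| < 1) (h₁ : |x₁| < 1)
    (hsign : (0 ≤ x₀ ∧ 0 ≤ x₁) ∨ (x₀ ≤ 0 ∧ x₁ ≤ 0)) :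
    |palaisArc x₀ x₁| ≤ |x₁ - x₀| + |palaisCurve x₁ - palaisCurve x₀| := by
  obtain ⟨h₀l, h₀r⟩ := abs_lt.mp h₀
  obtain ⟨h₁l, h₁r⟩ := abs_lt.mp h₁
  rcases le_total x₀ x₁ with hle | hle
  · have hsign' : (∀ u ∈ Set.Icc x₀ x₁, 0 ≤ u) ∨ (∀ u ∈ Set.Icc x₀ x₁, u ≤ 0) := by
      rcases hsign with ⟨h, _⟩ | ⟨_, h⟩
      · exact Or.inl (fun u hu => le_trans h hu.1)
      · exact Or.inr (fun u hu => le_trans hu.2 h)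
    have := arc_le x₀ x₁ h₀l hle h₁r hsign'
    rw [abs_of_nonneg (palaisArc_nonneg hle)]
    calc palaisArc x₀ x₁ ≤ (x₁ - x₀) + |palaisCurve x₁ - palaisCurve x₀| := this
      _ ≤ |x₁ - x₀| + |palaisCurve x₁ - palaisCurve x₀| := by
          gcongr; exact le_abs_self _
  · have hsign' : (∀ u ∈ Set.Icc x₁ x₀, 0 ≤ u) ∨ (∀ u ∈ Set.Icc x₁ x₀, u ≤ 0) := by
      rcases hsign with ⟨_, h⟩ | ⟨h, _⟩
      · exact Or.inl (fun u hu => le_trans h hu.1)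
      · exact Or.inr (fun u hu => le_trans hu.2 h)
    have h2 := arc_le x₁ x₀ h₁l hle h₀r hsign'
    rw [palaisArc_symm, abs_neg, abs_of_nonneg (palaisArc_nonneg hle)]
    calc palaisArc x₁ x₀ ≤ (x₀ - x₁) + |palaisCurve x₀ - palaisCurve x₁| := h2
      _ ≤ |x₁ - x₀| + |palaisCurve x₁ - palaisCurve x₀| := by
          rw [abs_sub_comm x₁ x₀, abs_sub_comm (palaisCurve x₁)]
          gcongr; exact le_abs_self _


/-- In Palais's example every point of the strip `X = [-1,1] × ℝ` has a wandering
neighbourhood, i.e. `X` is a Cartan `ℝ`-space. -/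
theorem palais_is_cartan
    (φ : ℝ → ℝ × ℝ → ℝ × ℝ)
    (hcont : Continuous fun q : ℝ × (ℝ × ℝ) => φ q.1 q.2)
    (hzero : ∀ p, φ 0 p = p)
    (hadd : ∀ s t p, φ (s + t) p = φ s (φ t p))
    (hmem : ∀ (t : ℝ) (p : ℝ × ℝ), p ∈ palaisStrip → φ t p ∈ palaisStrip)
    (hright : ∀ t y : ℝ, φ t (1, y) = (1, y + t))
    (hleft : ∀ t y : ℝ, φ t (-1, y) = (-1, y - t))
    (hint : ∀ t x₀ y₀ : ℝ, |x₀| < 1 →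
      |(φ t (x₀, y₀)).1| < 1 ∧
      (φ t (x₀, y₀)).2 - palaisCurve (φ t (x₀, y₀)).1 = y₀ - palaisCurve x₀ ∧
      palaisArc x₀ (φ t (x₀, y₀)).1 = t) :
    ∀ p ∈ palaisStrip, ∃ N : Set (ℝ × ℝ), N ⊆ palaisStrip ∧ N ∈ nhdsWithin p palaisStrip ∧
      Bornology.IsBounded {t : ℝ | ((φ t '' N) ∩ N).Nonempty} := by
  intro p hp
  obtain ⟨hpl, hpr⟩ := hp
  by_cases hcase : |p.1| < 1
  · -- interior point
    set ε : ℝ := (1 - |p.1|) / 2 with hε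
    have hε0 : 0 < ε := by rw [hε]; linarith
    set r : ℝ := (1 + |p.1|) / 2 with hr
    have hr1 : r < 1 := by rw [hr]; linarith
    have hεr : ε + |p.1| = r := by rw [hε, hr]; ring
    have key : ∀ u : ℝ, |u - p.1| ≤ ε → |u| ≤ r := by
      intro u h
      calc |u| = |(u - p.1) + p.1| := by ring_nf
        _ ≤ |u - p.1| + |p.1| := abs_add_le _ _
        _ ≤ ε + |p.1| := by linarith
        _ = r := hεr
    refine ⟨{q | q ∈ palaisStrip ∧ |q.1 - p.1| ≤ ε}, fun q hq => hq.1, ?_, ?_⟩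
    · rw [mem_nhdsWithin]
      refine ⟨{q : ℝ × ℝ | |q.1 - p.1| < ε}, ?_, ?_, ?_⟩
      · exact isOpen_lt (continuous_fst.sub continuous_const).abs continuous_const
      · show |p.1 - p.1| < ε
        simpa using hε0
      · intro q hq
        exact ⟨hq.2, le_of_lt hq.1⟩
    · set C : ℝ := 1 + 2 / (1 - r ^ 2) ^ 2 with hC
      have hr0 : (0:ℝ) ≤ r := by rw [hr]; positivity
      have hC0 : 0 ≤ C := by
        have h1 : (0:ℝ) < 1 - r ^ 2 := by nlinarith
        rw [hC]; positivity
      apply (Metric.isBounded_closedBall (x := (0:ℝ)) (r := C * 2)).subset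
      intro t ht
      obtain ⟨z, ⟨q, hqN, rfl⟩, hzN⟩ := ht
      obtain ⟨qx, qy⟩ := q
      have hqr : |qx| ≤ r := key qx hqN.2
      have hqlt : |qx| < 1 := lt_of_le_of_lt hqr hr1
      obtain ⟨hx1, hinv, harc⟩ := hint t qx qy hqlt
      have hx1r : |(φ t (qx, qy)).1| ≤ r := key _ hzN.2
      rw [Metric.mem_closedBall, Real.dist_eq, sub_zero, ← harc]
      have hbound : ∀ u ∈ Set.uIoc qx (φ t (qx, qy)).1,
          ‖Real.sqrt (1 + deriv palaisCurve u ^ 2)‖ ≤ C := by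
        intro u hu
        obtain ⟨hul, huu⟩ := hu
        have h1 := abs_le.mp hqr
        have h2 := abs_le.mp hx1r
        have hur : |u| ≤ r := by
          rw [abs_le]
          constructor
          · have : -r ≤ min qx (φ t (qx, qy)).1 := le_min h1.1 h2.1
            linarith [lt_of_le_of_lt this hul]
          · exact le_trans huu (max_le h1.2 h2.2)
        rw [Real.norm_eq_abs, abs_of_nonneg (Real.sqrt_nonneg _)]
        exact integrand_bound r u hr1 hur
      have hle := intervalIntegral.norm_integral_le_of_norm_le_const hbound
      rw [Real.norm_eq_abs] at hle
      have hΔ : |(φ t (qx, qy)).1 - qx| ≤ 2 := by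
        obtain ⟨a1, a2⟩ := abs_le.mp hqN.2
        obtain ⟨b1, b2⟩ := abs_le.mp hzN.2
        rw [abs_le]
        constructor <;> [skip; skip] <;> nlinarith [abs_nonneg p.1, hε0]
      calc |palaisArc qx (φ t (qx, qy)).1| ≤ C * |(φ t (qx, qy)).1 - qx| := hle
        _ ≤ C * 2 := by nlinarith
  · -- boundary point
    have hone : p.1 = 1 ∨ p.1 = -1 := by
      rcases abs_cases p.1 with ⟨h, h'⟩ | ⟨h, h'⟩ <;>
        [left; right] <;> nlinarith [not_lt.mp hcase]
    rcases hone with h1 | h1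
    · -- right boundary
      refine ⟨{q | q ∈ palaisStrip ∧ 1/2 ≤ q.1 ∧ |q.2 - p.2| ≤ 1}, fun q hq => hq.1, ?_, ?_⟩
      · rw [mem_nhdsWithin]
        refine ⟨{q : ℝ × ℝ | 1/2 < q.1 ∧ |q.2 - p.2| < 1}, ?_, ?_, ?_⟩
        · exact (isOpen_lt continuous_const continuous_fst).inter
            (isOpen_lt (continuous_snd.sub continuous_const).abs continuous_const)
        · constructor
          · show (1:ℝ)/2 < p.1; rw [h1]; norm_num
          · show |p.2 - p.2| < 1; simp
        · intro q hq
          exact ⟨hq.2, le_of_lt hq.1.1, le_of_lt hq.1.2⟩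
      · apply (Metric.isBounded_closedBall (x := (0:ℝ)) (r := 3)).subset
        intro t ht
        obtain ⟨z, ⟨q, hqN, rfl⟩, hzN⟩ := ht
        obtain ⟨qx, qy⟩ := q
        obtain ⟨hqS, hqhalf, hqy⟩ := hqN
        obtain ⟨hzS, hzhalf, hzy⟩ := hzN
        rw [Metric.mem_closedBall, Real.dist_eq, sub_zero]
        by_cases hqx1 : qx = 1
        · subst hqx1
          rw [hright t qy] at hzy
          obtain ⟨a1, a2⟩ := abs_le.mp hqy
          have hzy' : |qy + t - p.2| ≤ 1 := hzy
          obtain ⟨b1, b2⟩ := abs_le.mp hzy'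
          rw [abs_le]
          constructor <;> linarith
        · have hqx' : qx < 1 := lt_of_le_of_ne hqS.2 hqx1
          have hqxlt : |qx| < 1 := abs_lt.mpr ⟨by linarith, hqx'⟩
          obtain ⟨hx1, hinv, harc⟩ := hint t qx qy hqxlt
          obtain ⟨c1, c2⟩ := abs_lt.mp hx1
          have habs := abs_palaisArc_le qx (φ t (qx, qy)).1 hqxlt hx1
            (Or.inl ⟨by linarith, by linarith⟩)
          rw [← harc]
          have hΔx : |(φ t (qx, qy)).1 - qx| ≤ 1 := by
            rw [abs_le]; constructor <;> linarith
          have hΔf : palaisCurve (φ t (qx, qy)).1 - palaisCurve qx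
              = (φ t (qx, qy)).2 - qy := by linarith
          have hΔy : |(φ t (qx, qy)).2 - qy| ≤ 2 := by
            obtain ⟨a1, a2⟩ := abs_le.mp hqy
            obtain ⟨b1, b2⟩ := abs_le.mp hzy
            rw [abs_le]; constructor <;> linarith
          rw [hΔf] at habs
          linarith
    · -- left boundary
      refine ⟨{q | q ∈ palaisStrip ∧ q.1 ≤ -(1/2) ∧ |q.2 - p.2| ≤ 1}, fun q hq => hq.1, ?_, ?_⟩
      · rw [mem_nhdsWithin]
        refine ⟨{q : ℝ × ℝ | q.1 < -(1/2) ∧ |q.2 - p.2| < 1}, ?_, ?_, ?_⟩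
        · exact (isOpen_lt continuous_fst continuous_const).inter
            (isOpen_lt (continuous_snd.sub continuous_const).abs continuous_const)
        · constructor
          · show p.1 < -(1/2); rw [h1]; norm_num
          · show |p.2 - p.2| < 1; simp
        · intro q hq
          exact ⟨hq.2, le_of_lt hq.1.1, le_of_lt hq.1.2⟩
      · apply (Metric.isBounded_closedBall (x := (0:ℝ)) (r := 3)).subset
        intro t ht
        obtain ⟨z, ⟨q, hqN, rfl⟩, hzN⟩ := ht
        obtain ⟨qx, qy⟩ := q
        obtain ⟨hqS, hqhalf, hqy⟩ := hqN
        obtain ⟨hzS, hzhalf, hzy⟩ := hzN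
        rw [Metric.mem_closedBall, Real.dist_eq, sub_zero]
        by_cases hqx1 : qx = -1
        · subst hqx1
          rw [hleft t qy] at hzy
          obtain ⟨a1, a2⟩ := abs_le.mp hqy
          have hzy' : |qy - t - p.2| ≤ 1 := hzy
          obtain ⟨b1, b2⟩ := abs_le.mp hzy'
          rw [abs_le]
          constructor <;> linarith
        · have hqx' : -1 < qx := lt_of_le_of_ne hqS.1 (Ne.symm hqx1)
          have hqxlt : |qx| < 1 := abs_lt.mpr ⟨hqx', by linarith⟩
          obtain ⟨hx1, hinv, harc⟩ := hint t qx qy hqxlt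
          obtain ⟨c1, c2⟩ := abs_lt.mp hx1
          have habs := abs_palaisArc_le qx (φ t (qx, qy)).1 hqxlt hx1
            (Or.inr ⟨by linarith, by linarith⟩)
          rw [← harc]
          have hΔx : |(φ t (qx, qy)).1 - qx| ≤ 1 := by
            rw [abs_le]; constructor <;> linarith
          have hΔf : palaisCurve (φ t (qx, qy)).1 - palaisCurve qx
              = (φ t (qx, qy)).2 - qy := by linarith
          have hΔy : |(φ t (qx, qy)).2 - qy| ≤ 2 := by
            obtain ⟨a1, a2⟩ := abs_le.mp hqy
            obtain ⟨b1, b2⟩ := abs_le.mp hzy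
            rw [abs_le]; constructor <;> linarith
          rw [hΔf] at habs
          linarith
end
end
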